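/- Let r ≥ 2 and L = ∂_x^r + ε^{−r} r x as above. Then the differential-operator part of L^{(r+1)/r} equals ∂_x^{r+1} + (r+1) ε^{−r} x ∂_x + ((r+1)/2) ε^{−r}. -/

import Mathlib

open Finset

/-- The generalized binomial coefficient `k(k−1)⋯(k−l+1)/l!` for `k : ℤ`. -/
def genBinom (k : ℤ) (l : ℕ) : ℚ :=
  (∏ i ∈ Finset.range l, ((k : ℚ) - (i : ℚ))) / (Nat.factorial l : ℚ)

/-- A pseudo-differential operator `Σ_{n ≤ bound} a_n ∂ₓ^n` with coefficients in `R`: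
a family of coefficients `a_n` indexed by `n : ℤ`, vanishing above some bound. -/
structure PDO (R : Type*) [CommRing R] where
  coeff : ℤ → R
  bound : ℤ
  coeff_eq_zero : ∀ n : ℤ, bound < n → coeff n = 0

variable {R : Type*} [CommRing R] [Algebra ℚ R]

/-- The coefficient of `∂ₓ^n` in the composition `A ∘ B`, determined by the generalized
Leibniz rule `∂ₓ^k ∘ f = Σ_{l ≥ 0} (k(k−1)⋯(k−l+1)/l!)(∂^l f) ∂ₓ^{k−l}` together with
bilinearity and continuity: the terms `a_k · (k…(k−l+1)/l!) ∂^l(b_j)` with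
`k − l + j = n` are parametrized by `k = n − B.bound + p` and `l ≤ p`. -/
def pdoCompCoeff (D : Derivation ℚ R R) (A B : PDO R) (n : ℤ) : R :=
  ∑ p ∈ Finset.range (A.bound + B.bound + 1 - n).toNat,
    ∑ l ∈ Finset.range (p + 1),
      A.coeff (n - B.bound + p) *
        (genBinom (n - B.bound + p) l • (⇑D)^[l] (B.coeff (B.bound - p + l)))

/-- Composition of pseudo-differential operators. -/
def pdoComp (D : Derivation ℚ R R) (A B : PDO R) : PDO R where
  coeff := pdoCompCoeff D A B
  bound := A.bound + B.bound
  coeff_eq_zero := by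
    intro n hn
    have h : (A.bound + B.bound + 1 - n).toNat = 0 := by omega
    simp [pdoCompCoeff, h]

/-- The pseudo-differential operator `∂ₓ^k`. -/
def pdoDelta (k : ℤ) : PDO R where
  coeff := fun n => if n = k then 1 else 0
  bound := k
  coeff_eq_zero := by
    intro n hn
    try dsimp only
    rw [if_neg (by omega)]

/-- The identity pseudo-differential operator `1 = ∂ₓ^0`. -/
def pdoOne : PDO R := pdoDelta 0

/-- Iterated composition power `A^n` of a pseudo-differential operator. -/
def pdoNpow (D : Derivation ℚ R R) (A : PDO R) : ℕ → PDO R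
  | 0 => pdoOne
  | n + 1 => pdoComp D A (pdoNpow D A n)

/-- The differential-operator part `A₊ = Σ_{n ≥ 0} a_n ∂ₓ^n`. -/
def pdoPlus (A : PDO R) : PDO R where
  coeff := fun n => if 0 ≤ n then A.coeff n else 0
  bound := max A.bound 0
  coeff_eq_zero := by
    intro n hn
    try dsimp only
    by_cases h : 0 ≤ n
    · rw [if_pos h]; exact A.coeff_eq_zero n (by omega)
    · rw [if_neg h]

/-- The purely negative part `A₋ = A − A₊ = Σ_{n ≤ −1} a_n ∂ₓ^n`. -/
def pdoMinus (A : PDO R) : PDO R where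
  coeff := fun n => if n < 0 then A.coeff n else 0
  bound := -1
  coeff_eq_zero := by
    intro n hn
    try dsimp only
    rw [if_neg (by omega)]


/-- The coefficient ring `ℂ[ε, ε^{−1}][x]`. -/
abbrev CoeffRing : Type := Polynomial (LaurentPolynomial ℂ)

/-- The derivation `∂ = d/dx` on `ℂ[ε, ε^{−1}][x]` (so `∂(x) = 1` and `∂(ε) = 0`). -/
noncomputable def Dx : Derivation ℚ CoeffRing CoeffRing where
  toFun := Polynomial.derivative
  map_add' := by simp
  map_smul' := by intro q p; simp
  map_one_eq_zero' := by simp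
  leibniz' := by
    intro a b
    show Polynomial.derivative (a * b) = a • Polynomial.derivative b + b • Polynomial.derivative a
    simp only [Polynomial.derivative_mul, smul_eq_mul]
    ring

/-!
Write `B = ∂ₓ + Σ bₙ ∂ₓ^{-n}`. If `b₀ = ⋯ = b_{s-1} = 0` and `P = ∂ₓ^m + (lower order)`, then
the coefficients of `B ∘ P` of order `≥ m - 1 - s` only see `∂ₓ ∘ P` and
`(b_s ∂ₓ^{-s} + b_{s+1} ∂ₓ^{-s-1}) ∘ ∂ₓ^m`. By induction,
`B^m = ∂ₓ^m + m b_s ∂ₓ^{m-1-s} + (m b_{s+1} + C(m,2) ∂b_s) ∂ₓ^{m-2-s} + ⋯`.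
Comparing with `B^r = L = ∂ₓ^r + r ε^{-r} x` forces `b₀ = ⋯ = b_{r-2} = 0`, `b_{r-1} = ε^{-r} x`
and `b_r = -((r-1)/2) ε^{-r}`, and the nonnegative part of `B^{r+1} = B ∘ L` is read off from
the same composition formula.
-/

namespace PDO

structure IsMonic {S : Type*} [CommRing S] (P : PDO S) (m : ℤ) : Prop where
  coeff_self : P.coeff m = 1
  coeff_of_lt : ∀ j, m < j → P.coeff j = 0

theorem IsMonic.coeff_of_eq {S : Type*} [CommRing S] {P : PDO S} {m : ℤ} (hP : P.IsMonic m)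
    {j : ℤ} (h : j = m) : P.coeff j = 1 :=
  h ▸ hP.coeff_self

theorem IsMonic.iterate_coeff_eq_zero {P : PDO R} {m : ℤ} (hP : P.IsMonic m)
    (D : Derivation ℚ R R) {j : ℤ} {l : ℕ} (hj : m ≤ j) (h : m < j ∨ l ≠ 0) :
    (⇑D)^[l] (P.coeff j) = 0 := by
  obtain hj | rfl := hj.lt_or_eq
  · rw [hP.coeff_of_lt j hj, iterate_map_zero]
  · obtain ⟨l, rfl⟩ := Nat.exists_eq_succ_of_ne_zero (h.resolve_left (lt_irrefl _))
    rw [Function.iterate_succ_apply, hP.coeff_self, D.map_one_eq_zero, iterate_map_zero]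

end PDO

theorem genBinom_zero (k : ℤ) : genBinom k 0 = 1 := by simp [genBinom]

theorem genBinom_one (k : ℤ) : genBinom k 1 = k := by simp [genBinom]

theorem genBinom_one_left_of_two_le {l : ℕ} (hl : 2 ≤ l) : genBinom 1 l = 0 := by
  rw [genBinom, prod_eq_zero (mem_range.2 hl) (by norm_num), zero_div]

theorem pdoCompCoeff_eq_finsum (D : Derivation ℚ R R) (A B : PDO R) (n : ℤ) :
    pdoCompCoeff D A B n =
      ∑ᶠ x : ℤ × ℕ, A.coeff x.1 * (genBinom x.1 x.2 • (⇑D)^[x.2] (B.coeff (n - x.1 + x.2))) := by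
  set g : ℤ × ℕ → R :=
    fun x => A.coeff x.1 * (genBinom x.1 x.2 • (⇑D)^[x.2] (B.coeff (n - x.1 + x.2)))
  set T := ((range (A.bound + B.bound + 1 - n).toNat).sigma fun p => range (p + 1)).image
    fun x => (n - B.bound + x.1, x.2)
  have hsupp : Function.support g ⊆ T := by
    rintro ⟨k, l⟩ hkl
    have hA : k ≤ A.bound := by
      by_contra h
      exact hkl (by simp only [g, A.coeff_eq_zero k (by omega), zero_mul])
    have hB : n - k + l ≤ B.bound := by
      by_contra h
      exact hkl (by simp only [g, B.coeff_eq_zero (n - k + l) (by omega), iterate_map_zero,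
        smul_zero, mul_zero])
    simp only [T, coe_image, coe_sigma, Set.mem_image, Set.mem_sigma_iff, coe_range,
      Set.mem_Iio, Prod.mk.injEq]
    refine ⟨⟨(k - (n - B.bound)).toNat, l⟩, ⟨?_, ?_⟩, ?_, rfl⟩ <;> dsimp only <;> omega
  rw [finsum_eq_sum_of_support_subset g hsupp, sum_image, sum_sigma]
  · refine sum_congr rfl fun p _ => sum_congr rfl fun l _ => ?_
    simp only [g, show n - (n - B.bound + p) + l = B.bound - p + l by ring]
  · rintro ⟨p, l⟩ _ ⟨p', l'⟩ _ h
    simp only [Prod.mk.injEq, add_right_inj, Nat.cast_inj] at h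
    rw [h.1, h.2]

theorem pdoCompCoeff_eq_of_gap (D : Derivation ℚ R R) {A P : PDO R} {m : ℤ} {s : ℕ}
    (hA : A.IsMonic 1) (hgap : ∀ k : ℤ, 1 - s ≤ k → k ≤ 0 → A.coeff k = 0)
    (hP : P.IsMonic m) {n : ℤ} (hn : m - 1 - s ≤ n) :
    pdoCompCoeff D A P n = P.coeff (n - 1) + D (P.coeff n) + A.coeff (-s) * P.coeff (n + s) +
      A.coeff (-s - 1) * P.coeff (n + s + 1) := by
  rw [pdoCompCoeff_eq_finsum, finsum_eq_sum_of_support_subset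
    (s := {(1, 0), (1, 1), (-(s : ℤ), 0), (-(s : ℤ) - 1, 0)})]
  · rw [sum_insert (by simp; omega), sum_insert (by simp), sum_insert (by simp; omega),
      sum_singleton]
    simp only [genBinom_zero, genBinom_one, Int.cast_one, one_smul, Function.iterate_zero,
      Function.iterate_one, id_eq, hA.coeff_self, one_mul, Nat.cast_zero, Nat.cast_one]
    ring_nf
  · rintro ⟨k, l⟩ hkl
    by_contra hS
    simp only [coe_insert, coe_singleton, Set.mem_insert_iff, Set.mem_singleton_iff,
      Prod.mk.injEq] at hS
    apply hkl
    dsimp only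
    obtain hk | rfl | hk := lt_trichotomy 1 k
    · rw [hA.coeff_of_lt k hk, zero_mul]
    · rw [genBinom_one_left_of_two_le (by omega), zero_smul, mul_zero]
    · obtain hk0 | hks := le_or_gt (1 - s : ℤ) k
      · rw [hgap k hk0 (by omega), zero_mul]
      · rw [hP.iterate_coeff_eq_zero D (by omega) (by omega), smul_zero, mul_zero]

section Powers

variable (D : Derivation ℚ R R) {B : PDO R}

theorem pdoNpow_succ_coeff (m : ℕ) (n : ℤ) :
    (pdoNpow D B (m + 1)).coeff n = pdoCompCoeff D B (pdoNpow D B m) n :=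
  rfl

theorem pdoNpow_zero_coeff (n : ℤ) : (pdoNpow D B 0).coeff n = if n = 0 then 1 else 0 :=
  rfl

theorem isMonic_pdoNpow (hB : B.IsMonic 1) (m : ℕ) : (pdoNpow D B m).IsMonic m := by
  induction m with
  | zero => exact ⟨by simp [pdoNpow_zero_coeff], fun j hj => by simp [pdoNpow_zero_coeff]; omega⟩
  | succ m ih =>
    have key := fun n hn => pdoCompCoeff_eq_of_gap D hB (s := 0) (by omega) ih (n := n) hn
    constructor
    · rw [pdoNpow_succ_coeff, key _ (by omega)]
      simp (disch := omega) only [ih.coeff_of_eq, ih.coeff_of_lt, map_zero, mul_zero, add_zero]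
    · intro j hj
      rw [pdoNpow_succ_coeff, key _ (by omega)]
      simp (disch := omega) only [ih.coeff_of_lt, map_zero, mul_zero, add_zero]

variable {s : ℕ} (hB : B.IsMonic 1) (hgap : ∀ k : ℤ, 1 - s ≤ k → k ≤ 0 → B.coeff k = 0)
include hB hgap

theorem pdoNpow_coeff_eq_zero_of_gap (m : ℕ) {j : ℤ} (hj₁ : m - s ≤ j) (hj₂ : j < m) :
    (pdoNpow D B m).coeff j = 0 := by
  induction m generalizing j with
  | zero => simp [pdoNpow_zero_coeff]; omega
  | succ m ih =>
    have hP := isMonic_pdoNpow D hB m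
    rw [pdoNpow_succ_coeff, pdoCompCoeff_eq_of_gap D hB hgap hP (by omega)]
    obtain rfl | hj := eq_or_lt_of_le (show j ≤ m by omega)
    · simp (disch := omega) only [ih, hP.coeff_of_eq, hP.coeff_of_lt, D.map_one_eq_zero,
        mul_zero, add_zero]
    · simp (disch := omega) only [ih, hP.coeff_of_lt, map_zero, mul_zero, add_zero]

theorem pdoNpow_coeff_sub_one_sub (m : ℕ) :
    (pdoNpow D B m).coeff (m - 1 - s) = (m : ℚ) • B.coeff (-s) := by
  induction m with
  | zero => simp [pdoNpow_zero_coeff]; omega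
  | succ m ih =>
    have hP := isMonic_pdoNpow D hB m
    rw [pdoNpow_succ_coeff, pdoCompCoeff_eq_of_gap D hB hgap hP (by omega),
      show ((m + 1 : ℕ) : ℤ) - 1 - s - 1 = m - 1 - s by push_cast; ring, ih]
    have hD : D ((pdoNpow D B m).coeff ((m + 1 : ℕ) - 1 - s)) = 0 := by
      obtain rfl | hs := s.eq_zero_or_pos
      · simp (disch := omega) only [hP.coeff_of_eq, D.map_one_eq_zero]
      · simp (disch := omega) only [pdoNpow_coeff_eq_zero_of_gap D hB hgap, map_zero]
    simp (disch := omega) only [hD, hP.coeff_of_eq, hP.coeff_of_lt, mul_zero, add_zero, mul_one]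
    push_cast
    module

theorem pdoNpow_coeff_sub_two_sub (hs : 1 ≤ s) (m : ℕ) :
    (pdoNpow D B m).coeff (m - 2 - s) =
      (m : ℚ) • B.coeff (-s - 1) + ((m : ℚ) * (m - 1) / 2) • D (B.coeff (-s)) := by
  induction m with
  | zero => simp [pdoNpow_zero_coeff]; omega
  | succ m ih =>
    have hP := isMonic_pdoNpow D hB m
    rw [pdoNpow_succ_coeff, pdoCompCoeff_eq_of_gap D hB hgap hP (by omega),
      show ((m + 1 : ℕ) : ℤ) - 2 - s - 1 = m - 2 - s by push_cast; ring, ih,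
      show ((m + 1 : ℕ) : ℤ) - 2 - s = m - 1 - s by push_cast; ring,
      pdoNpow_coeff_sub_one_sub D hB hgap]
    simp (disch := omega) only [pdoNpow_coeff_eq_zero_of_gap D hB hgap, hP.coeff_of_eq,
      D.map_smul, mul_zero, add_zero, mul_one]
    push_cast
    module

theorem coeff_neg_eq_of_pdoNpow_coeff_zero {a : R}
    (h : (pdoNpow D B (s + 1)).coeff 0 = ((s + 1 : ℕ) : ℚ) • a) : B.coeff (-s) = a := by
  have hd := pdoNpow_coeff_sub_one_sub D hB hgap (s + 1)
  rw [show ((s + 1 : ℕ) : ℤ) - 1 - s = 0 by omega, h] at hd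
  exact smul_right_injective R (Nat.cast_ne_zero.2 s.succ_ne_zero) hd.symm

theorem coeff_neg_sub_one_eq_of_pdoNpow_coeff_neg_one (hs : 1 ≤ s)
    (h : (pdoNpow D B (s + 1)).coeff (-1) = 0) :
    B.coeff (-s - 1) = (-(s : ℚ) / 2) • D (B.coeff (-s)) := by
  have he := pdoNpow_coeff_sub_two_sub D hB hgap hs (s + 1)
  rw [show ((s + 1 : ℕ) : ℤ) - 2 - s = -1 by omega, h] at he
  refine smul_right_injective R (Nat.cast_ne_zero.2 s.succ_ne_zero : ((s + 1 : ℕ) : ℚ) ≠ 0) ?_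
  dsimp only
  rw [eq_neg_of_add_eq_zero_left he.symm, smul_smul, ← neg_smul]
  congr 1
  push_cast
  ring

end Powers

theorem coeff_eq_zero_of_pdoNpow_coeff_eq_zero (D : Derivation ℚ R R) {B : PDO R}
    (hB : B.IsMonic 1) {s : ℕ}
    (h : ∀ j : ℤ, 0 < j → j ≤ s → (pdoNpow D B (s + 1)).coeff j = 0) :
    ∀ k : ℤ, 1 - s ≤ k → k ≤ 0 → B.coeff k = 0 := by
  suffices ∀ t ≤ s, ∀ k : ℤ, 1 - t ≤ k → k ≤ 0 → B.coeff k = 0 from this s le_rfl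
  intro t
  induction t with
  | zero => intro _ k _ _; omega
  | succ t ih =>
    intro ht k hk₁ hk₂
    have hgap := ih (by omega)
    obtain rfl | hk := eq_or_lt_of_le (show -(t : ℤ) ≤ k by omega)
    · have hd := pdoNpow_coeff_sub_one_sub D hB hgap (s + 1)
      rw [h _ (by omega) (by omega), eq_comm, smul_eq_zero] at hd
      exact hd.resolve_left (by positivity)
    · exact hgap k (by omega) hk₂

theorem pdoCompCoeff_of_two_term (D : Derivation ℚ R R) {A L : PDO R} {s : ℕ} (hs : 1 ≤ s)
    (hA : A.IsMonic 1) (hgap : ∀ k : ℤ, 1 - s ≤ k → k ≤ 0 → A.coeff k = 0)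
    (hL1 : L.coeff (s + 1 : ℕ) = 1) (hL : ∀ j : ℤ, j ≠ (s + 1 : ℕ) → j ≠ 0 → L.coeff j = 0)
    {n : ℤ} (hn : 0 ≤ n) :
    pdoCompCoeff D A L n =
      if n = (s + 1 : ℕ) + 1 then 1
      else if n = 1 then L.coeff 0 + A.coeff (-s)
      else if n = 0 then D (L.coeff 0) + A.coeff (-s - 1)
      else 0 := by
  have hLm : L.IsMonic (s + 1 : ℕ) := ⟨hL1, fun j hj => hL j (by omega) (by omega)⟩
  have hL₀ : ∀ j : ℤ, j = 0 → L.coeff j = L.coeff 0 := by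
    rintro _ rfl
    rfl
  have hDL : ∀ j : ℤ, j ≠ 0 → D (L.coeff j) = 0 := by
    intro j hj
    obtain rfl | hj₁ := eq_or_ne j (s + 1 : ℕ)
    · rw [hL1, D.map_one_eq_zero]
    · rw [hL j hj₁ hj, map_zero]
  rw [pdoCompCoeff_eq_of_gap D hA hgap hLm (by omega)]
  split_ifs with h₁ h₂ h₃
  · simp (disch := omega) only [hLm.coeff_of_eq, hLm.coeff_of_lt, map_zero, mul_zero, add_zero]
  · simp (disch := omega) only [hL₀, hDL, hLm.coeff_of_eq, hLm.coeff_of_lt, mul_zero, add_zero,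
      mul_one]
  · simp (disch := omega) only [hL₀, hL, hLm.coeff_of_eq, mul_zero, zero_add, add_zero, mul_one]
  · simp (disch := omega) only [hL, hDL, mul_zero, add_zero]

theorem Dx_C_mul_X (c : LaurentPolynomial ℂ) :
    Dx (Polynomial.C c * Polynomial.X) = Polynomial.C c := by
  change Polynomial.derivative _ = _
  simp

/-- Let `r ≥ 2` and `L = ∂ₓ^r + ε^{−r} r x` over `ℂ[ε, ε^{−1}][x]`,
and let `L^{1/r} = B` be its (unique) `r`-th root of the form `∂ₓ + Σ_{n ≥ 0} bₙ ∂ₓ^{−n}`,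
so that `L^{(r+1)/r} = B^{r+1}`.  Then the differential-operator part of `L^{(r+1)/r}`
equals `∂ₓ^{r+1} + (r+1) ε^{−r} x ∂ₓ + ((r+1)/2) ε^{−r}`: its coefficient of `∂ₓ^n` for
`n ≥ 0` is `1` for `n = r+1`, `(r+1)ε^{−r}x` for `n = 1`, `((r+1)/2)ε^{−r}` for `n = 0`,
and `0` otherwise. -/
theorem plus_part_of_L_pow (r : ℕ) (hr : 2 ≤ r)
    (L : PDO CoeffRing)
    (hLr : L.coeff (r : ℤ) = 1)
    (hL0 : L.coeff 0 = Polynomial.C ((r : ℂ) • LaurentPolynomial.T (-(r : ℤ))) * Polynomial.X)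
    (hLother : ∀ n : ℤ, n ≠ (r : ℤ) → n ≠ 0 → L.coeff n = 0)
    (B : PDO CoeffRing)
    (hB1 : B.coeff 1 = 1) (hBtop : ∀ n : ℤ, 1 < n → B.coeff n = 0)
    (hBr : (pdoNpow Dx B r).coeff = L.coeff) :
    ∀ n : ℤ, 0 ≤ n →
      (pdoNpow Dx B (r + 1)).coeff n =
        if n = (r : ℤ) + 1 then 1
        else if n = 1 then
          Polynomial.C (((r : ℂ) + 1) • LaurentPolynomial.T (-(r : ℤ))) * Polynomial.X
        else if n = 0 then
          Polynomial.C ((((r : ℂ) + 1) / 2) • LaurentPolynomial.T (-(r : ℤ)))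
        else 0 := by
  obtain ⟨s, rfl⟩ : ∃ s, r = s + 1 := ⟨r - 1, by omega⟩
  have hB : B.IsMonic 1 := ⟨hB1, hBtop⟩
  have hL : ∀ j : ℤ, j ≠ (s + 1 : ℕ) → j ≠ 0 → (pdoNpow Dx B (s + 1)).coeff j = 0 :=
    hBr ▸ hLother
  have hgap := coeff_eq_zero_of_pdoNpow_coeff_eq_zero Dx hB
    fun j hj₁ hj₂ => hL j (by omega) (by omega)
  have hb₁ : B.coeff (-s) =
      Polynomial.C (LaurentPolynomial.T (-((s + 1 : ℕ) : ℤ))) * Polynomial.X := by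
    refine coeff_neg_eq_of_pdoNpow_coeff_zero Dx hB hgap ?_
    rw [hBr, hL0, ← Polynomial.smul_C, Nat.cast_smul_eq_nsmul ℂ, Nat.cast_smul_eq_nsmul ℚ,
      smul_mul_assoc]
  have hb₂ := coeff_neg_sub_one_eq_of_pdoNpow_coeff_neg_one Dx hB hgap (by omega)
    (hL (-1) (by omega) (by omega))
  rw [hb₁, Dx_C_mul_X] at hb₂
  intro n hn
  rw [pdoNpow_succ_coeff, pdoCompCoeff_of_two_term Dx (by omega) hB hgap (hBr ▸ hLr) hL hn,
    hb₁, hb₂, hBr, hL0, Dx_C_mul_X]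
  split_ifs
  · rfl
  · rw [add_smul, one_smul, map_add, add_mul]
  · simp only [← Polynomial.smul_C]
    rw [← Rat.cast_smul_eq_qsmul ℂ, ← add_smul]
    congr 1
    push_cast
    ring
  · rfl
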